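/- Let δ be a chain of n-torsion classes in the n-cluster-tilting subcategory M of the abelian length category A, and let T(δ) = {T(U_s)} be the induced chain of torsion classes of A. For any object X of M, the n-Harder-Narasimhan filtration of X with respect to δ (inside M) coincides, term by term up to isomorphism and with equal length, with the Harder-Narasimhan filtration of X with respect to T(δ) (inside A). -/

import Mathlib

open CategoryTheory CategoryTheory.Limits

universe w v u u' v' uG

set_option linter.dupNamespace false

namespace TorsionPaper

variable (A : Type u) [Category.{v} A] [Abelian A]
/-- `0 → X → Y → Z → 0` is a short exact sequence. -/
def SES {X Y Z : A} (f : X ⟶ Y) (g : Y ⟶ Z) : Prop :=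
  ∃ h : f ≫ g = 0, (ShortComplex.mk f g h).ShortExact

/-- Exactness at the middle object of `X → Y → Z`. -/
def IsExactAt {X Y Z : A} (f : X ⟶ Y) (g : Y ⟶ Z) : Prop :=
  ∃ h : f ≫ g = 0, (ShortComplex.mk f g h).Exact

/-- A class of objects closed under quotient objects. -/
def ClosedUnderQuotients (T : Set A) : Prop :=
  ∀ ⦃X Y : A⦄ (p : X ⟶ Y), Epi p → X ∈ T → Y ∈ T

/-- A class of objects closed under extensions. -/
def ClosedUnderExtensions (T : Set A) : Prop :=
  ∀ ⦃X Y Z : A⦄ (f : X ⟶ Y) (g : Y ⟶ Z), SES A f g → X ∈ T → Z ∈ T → Y ∈ T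

/-- Torsion classes: full subcategories closed under quotients and extensions. -/
def IsTorsionClass (T : Set A) : Prop :=
  ClosedUnderQuotients A T ∧ ClosedUnderExtensions A T

/-- The right Hom-perpendicular class of a class of objects. -/
def rperp (T : Set A) : Set A := {Y | ∀ X ∈ T, ∀ f : X ⟶ Y, f = 0}

/-- `(T, F)` is a torsion pair: no nonzero maps from `T` to `F`, and every object has
a short exact sequence with torsion subobject in `T` and torsion-free quotient in `F`. -/
def IsTorsionPair (T F : Set A) : Prop :=
  (∀ X ∈ T, ∀ Y ∈ F, ∀ f : X ⟶ Y, f = 0) ∧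
  ∀ M : A, ∃ (tM fM : A) (i : tM ⟶ M) (p : M ⟶ fM),
    tM ∈ T ∧ fM ∈ F ∧ SES A i p

/-- Quotients of objects of `X`. -/
def Fac (X : Set A) : Set A := {Y | ∃ Z ∈ X, ∃ p : Z ⟶ Y, Epi p}

/-- Subobjects of objects of `X`. -/
def SubOf (X : Set A) : Set A := {Y | ∃ Z ∈ X, ∃ i : Y ⟶ Z, Mono i}

/-- Objects admitting a finite filtration with successive quotients in `Y`. -/
def Filt (Y : Set A) : Set A :=
  {M | ∃ (nn : ℕ) (obj : ℕ → A) (map : ∀ i, obj i ⟶ obj (i + 1)),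
    IsZero (obj 0) ∧ obj nn = M ∧
    ∀ i, i < nn → ∃ (Q : A) (p : obj (i + 1) ⟶ Q), Q ∈ Y ∧ SES A (map i) p}

/-- The minimal torsion class containing a class `X` of objects. -/
def TT (X : Set A) : Set A := ⋂₀ {T : Set A | IsTorsionClass A T ∧ X ⊆ T}

/-- `A` is a length category: every object has a well-founded subobject lattice
in both directions. -/
def IsLengthCategory : Prop :=
  ∀ X : A, WellFoundedLT (Subobject X) ∧ WellFoundedGT (Subobject X)

/-- The set of torsion subobjects (with respect to the torsion class `T`)
of objects of `MM`; this is the class `tMM = {tM : M ∈ MM}`. -/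
def torsObjs (T MM : Set A) : Set A :=
  {Y | ∃ (X : A) (_ : X ∈ MM) (i : Y ⟶ X) (F : A) (p : X ⟶ F),
    Y ∈ T ∧ F ∈ rperp A T ∧ SES A i p}

/-- The set of torsion-free quotients (with respect to the torsion class `T`)
of objects of `MM`; this is the class `fMM = {coker (tM ↪ M) : M ∈ MM}`. -/
def freeQuots (T MM : Set A) : Set A :=
  {F | ∃ (X : A) (_ : X ∈ MM) (Y : A) (i : Y ⟶ X) (p : X ⟶ F),
    Y ∈ T ∧ F ∈ rperp A T ∧ SES A i p}

/-- Contravariantly finite subcategory: every object has a right approximation. -/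
def ContravariantlyFinite (X : Set A) : Prop :=
  ∀ C : A, ∃ (M : A) (_ : M ∈ X) (π : M ⟶ C),
    ∀ M' : A, M' ∈ X → ∀ π' : M' ⟶ C, ∃ f : M' ⟶ M, f ≫ π = π'

/-- Covariantly finite subcategory: every object has a left approximation. -/
def CovariantlyFinite (X : Set A) : Prop :=
  ∀ C : A, ∃ (M : A) (_ : M ∈ X) (ι : C ⟶ M),
    ∀ M' : A, M' ∈ X → ∀ ι' : C ⟶ M', ∃ f : M ⟶ M', ι ≫ f = ι'

/-- Functorially finite subcategory. -/
def FunctoriallyFinite (X : Set A) : Prop :=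
  ContravariantlyFinite A X ∧ CovariantlyFinite A X

/-- The union `⋃_{r > s} δ r`. -/
def unionGT (δ : unitInterval → Set A) (s : unitInterval) : Set A :=
  ⋃ (r : unitInterval) (_ : s < r), δ r

/-- The union `⋃_{r > s} δ r`, with the convention that it contains the zero
objects (so that at `s = 1` it is `{0}`). -/
def unionGTc (δ : unitInterval → Set A) (s : unitInterval) : Set A :=
  {Z : A | IsZero Z} ∪ unionGT A δ s

/-- The intersection `⋂_{r < s} δ r`. -/
def interLT (δ : unitInterval → Set A) (s : unitInterval) : Set A :=
  ⋂ (r : unitInterval) (_ : r < s), δ r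

/-- The intersection `⋂_{r < s} δ r` with the convention that at `s = 0` it is `MM`. -/
def interLTc (MM : Set A) (δ : unitInterval → Set A) (s : unitInterval) : Set A :=
  MM ∩ interLT A δ s

/-- A chain of torsion classes indexed by `[0,1]`: `T_0 = A`, `T_1 = {0}`,
order-reversing. -/
def IsChainOfTorsionClasses (η : unitInterval → Set A) : Prop :=
  (∀ s, IsTorsionClass A (η s)) ∧ η 0 = Set.univ ∧ η 1 = {Z : A | IsZero Z} ∧
  ∀ r s : unitInterval, r ≤ s → η s ⊆ η r

/-- The slice `P_t` of a chain of torsion classes `η`: torsion-free quotients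
(with respect to the torsion class `⋃_{s>t} η s`) of the objects of
`S_t = (⋂_{s<t} η s) \ (⋃_{s>t} η s)`. -/
def sliceP (η : unitInterval → Set A) (t : unitInterval) : Set A :=
  {Q | ∃ (M tM : A) (ι : tM ⟶ M) (p : M ⟶ Q),
    M ∈ interLT A η t ∧ M ∉ unionGTc A η t ∧
    tM ∈ unionGTc A η t ∧ Q ∈ rperp A (unionGTc A η t) ∧ SES A ι p}

/-- `(r, obj, map, t)` is a Harder-Narasimhan filtration of `X` with respect to the
chain of torsion classes `η`: a filtration `0 = obj 0 ⊆ obj 1 ⊆ ... ⊆ obj r = X` whose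
successive quotients lie in the slices `P_{t i}` with `t` strictly decreasing. -/
def IsHNFiltration (η : unitInterval → Set A) (X : A)
    (r : ℕ) (obj : ℕ → A) (map : ∀ i, obj i ⟶ obj (i + 1)) (t : ℕ → unitInterval) : Prop :=
  IsZero (obj 0) ∧ obj r = X ∧
  (∀ i j, i < j → j < r → t j < t i) ∧
  ∀ i, i < r → ∃ (Q : A) (p : obj (i + 1) ⟶ Q), Q ∈ sliceP A η (t i) ∧ SES A (map i) p


/-- A sequence of objects and morphisms `obj 0 → obj 1 → obj 2 → ⋯` in `A`. -/
structure Seq where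
  obj : ℕ → A
  map : ∀ i, obj i ⟶ obj (i + 1)

variable {A}

/-- Exactness of the induced complex
`0 → Hom(U', V^1) → Hom(U', V^2) → ⋯ → Hom(U', V^n) → 0`, where
`V^i = S.obj (i + 2)` for `1 ≤ i ≤ n`. -/
def HomSeqExact (U' : A) (S : Seq A) (n : ℕ) : Prop :=
  ∀ i, 1 ≤ i → i ≤ n →
    ∀ f : U' ⟶ S.obj (i + 2),
      (i < n → f ≫ S.map (i + 2) = 0) →
      (if i = 1 then f = 0 else ∃ g : U' ⟶ S.obj (i + 1), g ≫ S.map (i + 1) = f)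

variable (A)

/-- `S` encodes the fundamental `n`-exact sequence
`0 → U^X → X → V^1 → ⋯ → V^n → 0` of `X` with respect to `U`:
here `S.obj 0` and `S.obj (n+3)` are zero, `S.obj 1 = U^X ∈ U`, `S.obj 2 = X`,
`S.obj (i+2) = V^i ∈ MM`, the sequence is exact (as a sequence in the ambient
abelian category, all of whose terms lie in the `n`-cluster-tilting subcategory `MM`),
and `0 → Hom(U', V^1) → ⋯ → Hom(U', V^n) → 0` is exact for every `U' ∈ U`. -/
def IsNTorsionSequenceFor (n : ℕ) (MM U : Set A) (X : A) (S : Seq A) : Prop :=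
  IsZero (S.obj 0) ∧ IsZero (S.obj (n + 3)) ∧
  S.obj 1 ∈ U ∧ S.obj 2 = X ∧
  (∀ i, 3 ≤ i → i ≤ n + 2 → S.obj i ∈ MM) ∧
  (∀ i, i ≤ n + 1 → IsExactAt A (S.map i) (S.map (i + 1))) ∧
  (∀ U' ∈ U, HomSeqExact U' S n)

/-- `U` is an `n`-torsion class in the `n`-cluster-tilting subcategory `MM`
(Jørgensen's definition): every `X ∈ MM` admits a fundamental `n`-exact sequence. -/
def IsNTorsionClass (n : ℕ) (MM U : Set A) : Prop :=
  U ⊆ MM ∧ ∀ X ∈ MM, ∃ S : Seq A, IsNTorsionSequenceFor A n MM U X S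

/-- `ι : UX ⟶ X` exhibits `UX` as the `n`-torsion subobject of `X` with respect to
the `n`-torsion class `U`. -/
def IsNTorsionSubobject (n : ℕ) (MM U : Set A) (X UX : A) (ι : UX ⟶ X) : Prop :=
  ∃ (S : Seq A) (h1 : S.obj 1 = UX) (h2 : S.obj 2 = X),
    IsNTorsionSequenceFor A n MM U X S ∧
    eqToHom h1.symm ≫ S.map 1 ≫ eqToHom h2 = ι

/-- `MM` is generating: every object is a quotient of an object of `MM`. -/
def Generating (MM : Set A) : Prop := Fac A MM = Set.univ

/-- `MM` is cogenerating: every object is a subobject of an object of `MM`. -/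
def Cogenerating (MM : Set A) : Prop := SubOf A MM = Set.univ

/-- `MM` is an `n`-cluster-tilting subcategory of the abelian category `A`:
functorially finite, generating-cogenerating, and given by the vanishing of
`Ext^i` for `1 ≤ i ≤ n - 1` on either side. -/
def IsNClusterTilting [HasExt.{w} A] (n : ℕ) (MM : Set A) : Prop :=
  FunctoriallyFinite A MM ∧ Generating A MM ∧ Cogenerating A MM ∧
  (∀ X : A, X ∈ MM ↔ ∀ Y ∈ MM, ∀ i, 1 ≤ i → i ≤ n - 1 → Subsingleton (Abelian.Ext X Y i)) ∧
  (∀ Y : A, Y ∈ MM ↔ ∀ X ∈ MM, ∀ i, 1 ≤ i → i ≤ n - 1 → Subsingleton (Abelian.Ext X Y i))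

/-- A chain of `n`-torsion classes in `MM` indexed by `[0,1]`:
`U_0 = MM`, `U_1 = {0}`, order-reversing. -/
def IsChainOfNTorsionClasses (n : ℕ) (MM : Set A) (δ : unitInterval → Set A) : Prop :=
  (∀ s, IsNTorsionClass A n MM (δ s)) ∧ δ 0 = MM ∧ δ 1 = {Z : A | IsZero Z} ∧
  ∀ r s : unitInterval, r ≤ s → δ s ⊆ δ r

/-- `(r, obj, map, t)` is an `n`-Harder-Narasimhan filtration of `X` with respect to
the chain of `n`-torsion classes `δ`: a strict filtration
`0 = obj 0 ⊊ obj 1 ⊊ ⋯ ⊊ obj r = X` with strictly decreasing parameters `t i` such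
that `obj (i+1)` lies in `(⋂_{s < t i} U_s) \ (⋃_{s > t i} U_s)` and `obj i` is the
`n`-torsion subobject of `obj (i+1)` with respect to `⋃_{s > t i} U_s`; in particular
the `n`-cokernel of `obj i → obj (i+1)` lies in the slice `Q_{t i}`. -/
def IsNHNFiltration (n : ℕ) (MM : Set A) (δ : unitInterval → Set A) (X : A)
    (r : ℕ) (obj : ℕ → A) (map : ∀ i, obj i ⟶ obj (i + 1)) (t : ℕ → unitInterval) : Prop :=
  IsZero (obj 0) ∧ obj r = X ∧
  (∀ i j, i < j → j < r → t j < t i) ∧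
  ∀ i, i < r →
    obj (i + 1) ∈ interLTc A MM δ (t i) ∧ obj (i + 1) ∉ unionGTc A δ (t i) ∧
    ¬ IsIso (map i) ∧
    IsNTorsionSubobject A n MM (unionGTc A δ (t i)) (obj (i + 1)) (obj i) (map i)

end TorsionPaper

/-! Each step `U^X → X` of an `n`-HN filtration is the first map of a fundamental `n`-exact
sequence, so its cokernel embeds into `V^1` and is annihilated by `Hom(U, -)`, hence by
`Hom(T(U), -)`. Thus an `n`-HN filtration with respect to `δ` is already an HN filtration with
respect to `T(δ)`. HN filtrations with respect to any family of torsion classes are unique: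
Hom-vanishing from higher slices to lower torsion-free parts forces the last parameters to agree,
the last steps are then torsion subobjects for the same torsion class, and one inducts. -/

namespace TorsionPaper

open Category

variable {A : Type u}

lemma interLT_mono {η η' : unitInterval → Set A} (h : ∀ s, η s ⊆ η' s) (t : unitInterval) :
    interLT A η t ⊆ interLT A η' t :=
  Set.biInter_mono (fun _ h => h) fun s _ => h s

variable [Category.{v} A]

lemma unionGTc_mono {η η' : unitInterval → Set A} (h : ∀ s, η s ⊆ η' s) (t : unitInterval) :
    unionGTc A η t ⊆ unionGTc A η' t :=
  Set.union_subset_union_right _ (Set.biUnion_mono (fun _ h => h) fun s _ => h s)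

variable [Abelian A]

lemma SES.mono_f {X Y Z : A} {f : X ⟶ Y} {g : Y ⟶ Z} (h : SES A f g) : Mono f :=
  h.2.mono_f

lemma SES.epi_g {X Y Z : A} {f : X ⟶ Y} {g : Y ⟶ Z} (h : SES A f g) : Epi g :=
  h.2.epi_g

lemma SES.exists_lift {X Y Z W : A} {f : X ⟶ Y} {g : Y ⟶ Z} (h : SES A f g)
    (k : W ⟶ Y) (hk : k ≫ g = 0) : ∃ u : W ⟶ X, u ≫ f = k := by
  obtain ⟨_, hw⟩ := h
  have := hw.mono_f
  exact ⟨hw.exact.lift k hk, hw.exact.lift_f k hk⟩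

lemma SES.exists_desc {X Y Z W : A} {f : X ⟶ Y} {g : Y ⟶ Z} (h : SES A f g)
    (k : Y ⟶ W) (hk : f ≫ k = 0) : ∃ u : Z ⟶ W, g ≫ u = k := by
  obtain ⟨_, hw⟩ := h
  have := hw.epi_g
  exact ⟨hw.exact.desc k hk, hw.exact.g_desc k hk⟩

lemma SES.isIso_of_isZero {X Y Z : A} {f : X ⟶ Y} {g : Y ⟶ Z} (h : SES A f g)
    (hZ : IsZero Z) : IsIso f := by
  obtain ⟨_, hw⟩ := h
  have := hw.mono_f
  have : Epi f := hw.exact.epi_f (hZ.eq_of_tgt _ _)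
  exact isIso_of_mono_of_epi f

lemma SES.cokernel_π {X Y : A} (f : X ⟶ Y) [Mono f] : SES A f (cokernel.π f) :=
  ⟨cokernel.condition f, { exact := ShortComplex.exact_of_g_is_cokernel _ (cokernelIsCokernel f) }⟩

lemma SES.nonempty_iso_of_mem_of_mem_rperp {U : Set A} {T X Q T' X' Q' : A}
    {i : T ⟶ X} {p : X ⟶ Q} {i' : T' ⟶ X'} {p' : X' ⟶ Q'}
    (h : SES A i p) (h' : SES A i' p') (e : X ≅ X')
    (hT : T ∈ U) (hT' : T' ∈ U) (hQ : Q ∈ rperp A U) (hQ' : Q' ∈ rperp A U) :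
    Nonempty (T ≅ T') := by
  obtain ⟨u, hu⟩ := h'.exists_lift (i ≫ e.hom) (by rw [assoc, hQ' T hT (i ≫ e.hom ≫ p')])
  obtain ⟨v, hv⟩ := h.exists_lift (i' ≫ e.inv) (by rw [assoc, hQ T' hT' (i' ≫ e.inv ≫ p)])
  have := h.mono_f
  have := h'.mono_f
  refine ⟨⟨u, v, ?_, ?_⟩⟩
  · rw [← cancel_mono i, assoc, hv, reassoc_of% hu]; simp
  · rw [← cancel_mono i', assoc, hu, reassoc_of% hv]; simp

lemma rperp_anti {S T : Set A} (h : S ⊆ T) : rperp A T ⊆ rperp A S :=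
  fun _ hY X hX => hY X (h hX)

lemma isZero_of_mem_of_mem_rperp {T : Set A} {Q : A} (hT : Q ∈ T) (hQ : Q ∈ rperp A T) :
    IsZero Q :=
  (IsZero.iff_id_eq_zero Q).2 (hQ Q hT _)

lemma IsTorsionClass.mem_of_isZero {T : Set A} (hT : IsTorsionClass A T) {W Z : A} (hW : W ∈ T)
    (hZ : IsZero Z) : Z ∈ T :=
  hT.1 (0 : W ⟶ Z) ⟨fun u v _ => hZ.eq_of_src u v⟩ hW

lemma TT_isTorsionClass (U : Set A) : IsTorsionClass A (TT A U) :=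
  ⟨fun _ _ p hp hX T hT => hT.1.1 p hp (hX T hT),
    fun _ _ _ f g hses hX hZ T hT => hT.1.2 f g hses (hX T hT) (hZ T hT)⟩

lemma subset_TT (U : Set A) : U ⊆ TT A U :=
  fun _ hx _ hT => hT.2 hx

lemma TT_subset {U T : Set A} (hT : IsTorsionClass A T) (hsub : U ⊆ T) : TT A U ⊆ T :=
  fun _ hx => hx T ⟨hT, hsub⟩

lemma TT_mono {U V : Set A} (h : U ⊆ V) : TT A U ⊆ TT A V :=
  TT_subset (TT_isTorsionClass V) (h.trans (subset_TT V))

lemma isTorsionClass_setOf_hom_eq_zero (Q : A) : IsTorsionClass A {T : A | ∀ f : T ⟶ Q, f = 0} :=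
  ⟨fun _ _ p _ hX f => zero_of_epi_comp p (hX _),
    fun _ _ _ _ _ hses hX hZ h => by
      obtain ⟨u, hu⟩ := hses.exists_desc h (hX _)
      rw [← hu, hZ u, comp_zero]⟩

lemma rperp_subset_rperp_TT (U : Set A) : rperp A U ⊆ rperp A (TT A U) :=
  fun Q hQ _ hT => TT_subset (isTorsionClass_setOf_hom_eq_zero Q) (fun U' hU' => hQ U' hU') hT

lemma unionGTc_TT_subset (δ : unitInterval → Set A) (t : unitInterval) :
    unionGTc A (fun s => TT A (δ s)) t ⊆ TT A (unionGTc A δ t) := by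
  rintro X (hX | hX)
  · exact subset_TT _ (Or.inl hX)
  · obtain ⟨s, hs, hXs⟩ := Set.mem_iUnion₂.1 hX
    exact TT_mono (fun Y hY => Or.inr (Set.mem_iUnion₂.2 ⟨s, hs, hY⟩)) hXs

lemma IsNTorsionSubobject.exists_ses {n : ℕ} {MM U : Set A} {X Y : A} {ι : Y ⟶ X}
    (h : IsNTorsionSubobject A n MM U X Y ι) :
    ∃ (Q : A) (p : X ⟶ Q), SES A ι p ∧ Y ∈ U ∧ Q ∈ rperp A U := by
  obtain ⟨S, rfl, rfl, ⟨hz0, hz3, hU, -, -, hexact, hhom⟩, rfl⟩ := h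
  simp only [eqToHom_refl, id_comp, comp_id]
  obtain ⟨_, hex0⟩ := hexact 0 (by omega)
  obtain ⟨w1, hex1⟩ := hexact 1 (by omega)
  have : Mono (S.map 1) := hex0.mono_g (hz0.eq_of_src _ _)
  have hses := SES.cokernel_π (S.map 1)
  have : Epi (cokernel.π (S.map 1)) := hses.epi_g
  let ι' : cokernel (S.map 1) ⟶ S.obj 3 := cokernel.desc (S.map 1) (S.map 2) w1
  have : Mono ι' :=
    (ShortComplex.exact_iff_mono_cokernel_desc (ShortComplex.mk (S.map 1) (S.map 2) w1)).1 hex1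
  refine ⟨_, _, hses, hU, fun U' hU' g => zero_of_comp_mono ι' ?_⟩
  rcases Nat.eq_zero_or_pos n with rfl | hn
  · exact hz3.eq_of_tgt _ _
  · have hι' : ι' ≫ S.map 3 = 0 := by
      rw [← cancel_epi (cokernel.π (S.map 1)), cokernel.π_desc_assoc, (hexact 2 (by omega)).1,
        comp_zero]
    simpa using hhom U' hU' 1 le_rfl hn (g ≫ ι') fun _ => by rw [assoc, hι', comp_zero]

lemma IsNHNFiltration.isHNFiltration_TT {n : ℕ} {MM : Set A} {δ : unitInterval → Set A}
    {X : A} {r : ℕ} {obj : ℕ → A} {map : ∀ i, obj i ⟶ obj (i + 1)} {t : ℕ → unitInterval}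
    (h : IsNHNFiltration A n MM δ X r obj map t) :
    IsHNFiltration A (fun s => TT A (δ s)) X r obj map t := by
  obtain ⟨hz, hr, hdec, hstep⟩ := h
  refine ⟨hz, hr, hdec, fun i hi => ?_⟩
  obtain ⟨hmem, hnot, hniso, hsub⟩ := hstep i hi
  obtain ⟨Q, p, hses, hU, hQ⟩ := hsub.exists_ses
  have hQ' : Q ∈ rperp A (TT A (unionGTc A δ (t i))) := rperp_subset_rperp_TT _ hQ
  refine ⟨Q, p, ⟨obj (i + 1), obj i, map i, p, interLT_mono (fun s => subset_TT _) _ hmem.2,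
    fun hM => hniso ?_, unionGTc_mono (fun s => subset_TT _) _ hU,
    rperp_anti (unionGTc_TT_subset δ (t i)) hQ', hses⟩, hses⟩
  refine hses.isIso_of_isZero (isZero_of_mem_of_mem_rperp ?_ hQ')
  exact (TT_isTorsionClass _).1 p hses.epi_g (unionGTc_TT_subset δ (t i) hM)

section HarderNarasimhan

variable {η : unitInterval → Set A}

lemma sliceP_subset_rperp (t : unitInterval) : sliceP A η t ⊆ rperp A (unionGTc A η t) :=
  fun _ ⟨_, _, _, _, _, _, _, hQ, _⟩ => hQ

lemma sliceP_subset_of_lt (hη : ∀ s, IsTorsionClass A (η s)) {t s : unitInterval}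
    (hst : s < t) : sliceP A η t ⊆ η s := by
  rintro Q ⟨M, tM, ι, p, hM, -, -, -, hses⟩
  exact (hη s).1 p hses.epi_g (Set.mem_iInter₂.1 hM s hst)

lemma not_isZero_of_mem_sliceP (hη : ∀ s, IsTorsionClass A (η s)) {t : unitInterval} {Q : A}
    (hQ : Q ∈ sliceP A η t) : ¬ IsZero Q := by
  obtain ⟨M, tM, ι, p, -, hM, htM, -, hses⟩ := hQ
  intro hQ
  have : IsIso ι := hses.isIso_of_isZero hQ
  refine hM ?_
  rcases htM with htM | htM
  · exact Or.inl (htM.of_iso (asIso ι).symm)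
  · obtain ⟨s, hs, htMs⟩ := Set.mem_iUnion₂.1 htM
    exact Or.inr (Set.mem_iUnion₂.2 ⟨s, hs, (hη s).1 ι inferInstance htMs⟩)

lemma hom_eq_zero_of_mem_sliceP (hη : ∀ s, IsTorsionClass A (η s)) {t t' : unitInterval}
    (h : t' < t) {Q Q' : A} (hQ : Q ∈ sliceP A η t) (hQ' : Q' ∈ rperp A (unionGTc A η t'))
    (f : Q ⟶ Q') : f = 0 := by
  obtain ⟨s, h₁, h₂⟩ := exists_between h
  exact hQ' Q (Or.inr (Set.mem_iUnion₂.2 ⟨s, h₁, sliceP_subset_of_lt hη h₂ hQ⟩)) f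

variable {X : A} {r : ℕ} {obj : ℕ → A} {map : ∀ i, obj i ⟶ obj (i + 1)} {t : ℕ → unitInterval}

lemma IsHNFiltration.of_succ (h : IsHNFiltration A η X (r + 1) obj map t) :
    IsHNFiltration A η (obj r) r obj map t :=
  ⟨h.1, rfl, fun i j hij hj => h.2.2.1 i j hij (by omega), fun i hi => h.2.2.2 i (by omega)⟩

lemma IsHNFiltration.param_anti (h : IsHNFiltration A η X r obj map t) {i j : ℕ} (hij : i ≤ j)
    (hj : j < r) : t j ≤ t i := by
  rcases hij.lt_or_eq with hij | rfl
  · exact (h.2.2.1 i j hij hj).le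
  · exact le_rfl

lemma IsHNFiltration.not_isZero (hη : ∀ s, IsTorsionClass A (η s))
    (h : IsHNFiltration A η X (r + 1) obj map t) : ¬ IsZero X := by
  obtain ⟨-, rfl, -, hstep⟩ := h
  obtain ⟨Q, p, hQ, hses⟩ := hstep r (by omega)
  have := hses.epi_g
  exact fun hX => not_isZero_of_mem_sliceP hη hQ (IsZero.of_epi_eq_zero p (hX.eq_of_src _ _))

lemma IsHNFiltration.hom_eq_zero (hη : ∀ s, IsTorsionClass A (η s))
    (h : IsHNFiltration A η X r obj map t) {t' : unitInterval} (ht' : ∀ i < r, t' < t i)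
    {Q' : A} (hQ' : Q' ∈ rperp A (unionGTc A η t')) (g : X ⟶ Q') : g = 0 := by
  obtain ⟨h0, rfl, -, hstep⟩ := h
  suffices ∀ j ≤ r, ∀ g : obj j ⟶ Q', g = 0 from this r le_rfl g
  intro j
  induction j with
  | zero => exact fun _ g => h0.eq_of_src g 0
  | succ j ih =>
    intro hj g
    obtain ⟨Q, p, hQ, hses⟩ := hstep j (by omega)
    obtain ⟨d, rfl⟩ := hses.exists_desc g (ih (by omega) _)
    rw [hom_eq_zero_of_mem_sliceP hη (ht' j (by omega)) hQ hQ' d, comp_zero]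

lemma IsHNFiltration.mem_of_lt (hη : ∀ s, IsTorsionClass A (η s))
    (h : IsHNFiltration A η X r obj map t) (hr : 0 < r) {s : unitInterval}
    (hs : ∀ i < r, s < t i) : X ∈ η s := by
  obtain ⟨h0, rfl, -, hstep⟩ := h
  have hzero : obj 0 ∈ η s := by
    obtain ⟨Q, -, hQ, -⟩ := hstep 0 hr
    exact (hη s).mem_of_isZero (sliceP_subset_of_lt hη (hs 0 hr) hQ) h0
  suffices ∀ j ≤ r, obj j ∈ η s from this r le_rfl
  intro j
  induction j with
  | zero => exact fun _ => hzero
  | succ j ih =>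
    intro hj
    obtain ⟨Q, p, hQ, hses⟩ := hstep j (by omega)
    exact (hη s).2 (map j) p hses (ih (by omega)) (sliceP_subset_of_lt hη (hs j (by omega)) hQ)

lemma IsHNFiltration.mem_unionGTc (hη : ∀ s, IsTorsionClass A (η s))
    (h : IsHNFiltration A η X (r + 1) obj map t) : obj r ∈ unionGTc A η (t r) := by
  cases r with
  | zero => exact Or.inl h.1
  | succ k =>
    obtain ⟨s, hs₁, hs₂⟩ := exists_between (h.2.2.1 k (k + 1) (by omega) (by omega))
    refine Or.inr (Set.mem_iUnion₂.2 ⟨s, hs₁, h.of_succ.mem_of_lt hη (by omega) fun i hi => ?_⟩)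
    exact hs₂.trans_le (h.param_anti (by omega) (by omega))

lemma IsHNFiltration.not_lt_last_param (hη : ∀ s, IsTorsionClass A (η s))
    (h : IsHNFiltration A η X (r + 1) obj map t) {X' : A} {r' : ℕ} {obj' : ℕ → A}
    {map' : ∀ i, obj' i ⟶ obj' (i + 1)} {t' : ℕ → unitInterval}
    (h' : IsHNFiltration A η X' (r' + 1) obj' map' t') (e : X ≅ X') : ¬ t' r' < t r := by
  intro hlt
  obtain ⟨-, rfl, -, hstep'⟩ := h'
  obtain ⟨Q', p', hQ', hses'⟩ := hstep' r' (by omega)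
  have := hses'.epi_g
  refine not_isZero_of_mem_sliceP hη hQ' (IsZero.of_epi_eq_zero (e.hom ≫ p') ?_)
  exact h.hom_eq_zero hη (fun i hi => hlt.trans_le (h.param_anti (by omega) (by omega)))
    (sliceP_subset_rperp _ hQ') _

theorem IsHNFiltration.unique (hη : ∀ s, IsTorsionClass A (η s))
    (h : IsHNFiltration A η X r obj map t) {X' : A} {r' : ℕ} {obj' : ℕ → A}
    {map' : ∀ i, obj' i ⟶ obj' (i + 1)} {t' : ℕ → unitInterval}
    (h' : IsHNFiltration A η X' r' obj' map' t') (e : X ≅ X') :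
    r = r' ∧ (∀ i < r, t i = t' i) ∧ ∀ i ≤ r, Nonempty (obj i ≅ obj' i) := by
  induction r generalizing X X' r' with
  | zero =>
    cases r' with
    | zero =>
      refine ⟨rfl, by omega, fun i hi => ?_⟩
      obtain rfl : i = 0 := by omega
      exact ⟨h.1.iso h'.1⟩
    | succ m => exact (h'.not_isZero hη ((h.2.1 ▸ h.1).of_iso e.symm)).elim
  | succ k ih =>
    cases r' with
    | zero => exact (h.not_isZero hη ((h'.2.1 ▸ h'.1).of_iso e)).elim
    | succ m =>
      have hlast : t k = t' m :=
        le_antisymm (not_lt.1 (h.not_lt_last_param hη h' e))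
          (not_lt.1 (h'.not_lt_last_param hη h e.symm))
      obtain rfl := h.2.1
      obtain rfl := h'.2.1
      obtain ⟨Q, p, hQ, hses⟩ := h.2.2.2 k (by omega)
      obtain ⟨Q', p', hQ', hses'⟩ := h'.2.2.2 m (by omega)
      obtain ⟨etop⟩ := hses.nonempty_iso_of_mem_of_mem_rperp hses' e (h.mem_unionGTc hη)
        (hlast ▸ h'.mem_unionGTc hη) (sliceP_subset_rperp _ hQ)
        (hlast ▸ sliceP_subset_rperp _ hQ')
      obtain ⟨rfl, hparam, hobj⟩ := ih h.of_succ h'.of_succ etop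
      refine ⟨rfl, fun i hi => ?_, fun i hi => ?_⟩
      · rcases Nat.lt_succ_iff_lt_or_eq.1 hi with hi | rfl
        exacts [hparam i hi, hlast]
      · rcases Nat.le_succ_iff.1 hi with hi | rfl
        exacts [hobj i hi, ⟨e⟩]

end HarderNarasimhan

variable (A)

theorem n_hn_filtration_eq_hn_filtration
    (n : ℕ) (MM : Set A)
    (δ : unitInterval → Set A)
    (X : A)
    (r₁ r₂ : ℕ) (obj₁ obj₂ : ℕ → A)
    (map₁ : ∀ i, obj₁ i ⟶ obj₁ (i + 1)) (map₂ : ∀ i, obj₂ i ⟶ obj₂ (i + 1))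
    (t₁ t₂ : ℕ → unitInterval)
    (h₁ : IsNHNFiltration A n MM δ X r₁ obj₁ map₁ t₁)
    (h₂ : IsHNFiltration A (fun s => TT A (δ s)) X r₂ obj₂ map₂ t₂) :
    r₁ = r₂ ∧ (∀ i, i < r₁ → t₁ i = t₂ i) ∧
      ∀ i, i ≤ r₁ → Nonempty (obj₁ i ≅ obj₂ i) :=
  h₁.isHNFiltration_TT.unique (fun _ => TT_isTorsionClass _) h₂ (Iso.refl X)

end TorsionPaper
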